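/- For the f-oscillator SODE Γ' = Σ_k (𝒱^k ∂/∂Q^k − (f'(E))² Q^k ∂/∂𝒱^k) on ℝ^{2n}, where E = ½Σ_k((v^k)² + (q^k)²) is the undeformed oscillator energy and Q^k = q^k, 𝒱^k = f'(E) v^k, the frequency Ω = f'(E) is a constant of motion of Γ' (assuming f' > 0), and each integral curve with Ω = ω₀ is periodic with period 2π/ω₀. -/

import Mathlib

open Real

/-- The undeformed oscillator energy `E = ½Σ((vᵏ)² + (qᵏ)²)`. -/
noncomputable def oscEnergy {n : ℕ} (q v : Fin n → ℝ) : ℝ :=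
  (∑ k, v k ^ 2 + ∑ k, q k ^ 2) / 2

/-! Along the f-oscillator flow, `q' = Ω v` and `v' = -Ω q` with `Ω(t) = f'(E)`, so the phase point
rotates and `E` is conserved whatever `Ω` is; hence `Ω` is constant, the flow is a harmonic
oscillator of frequency `Ω`, `q(t) = cos(Ωt) q(0) + sin(Ωt) v(0)`, and `q`, `v` are `2π/Ω`-periodic. -/

theorem hasDerivAt_sum_sq {ι : Type*} [Fintype ι] {x : ℝ → ι → ℝ} {x' : ι → ℝ} {t : ℝ}
    (hx : HasDerivAt x x' t) :
    HasDerivAt (fun t => ∑ k, x t k ^ 2) (∑ k, 2 * x t k * x' k) t :=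
  HasDerivAt.fun_sum fun k _ => by
    simpa [mul_comm] using ((hasDerivAt_pi.mp hx) k).fun_pow 2

theorem hasDerivAt_oscEnergy_eq_zero {n : ℕ} {q v : ℝ → Fin n → ℝ} {a t : ℝ}
    (hq : HasDerivAt q (a • v t) t) (hv : HasDerivAt v (-a • q t) t) :
    HasDerivAt (fun t => oscEnergy (q t) (v t)) 0 t := by
  have h := ((hasDerivAt_sum_sq hv).add (hasDerivAt_sum_sq hq)).div_const 2
  refine h.congr_deriv ?_
  simp only [Pi.smul_apply, smul_eq_mul, ← Finset.sum_add_distrib]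
  rw [Finset.sum_eq_zero fun k _ => by ring, zero_div]

theorem oscEnergy_eq_of_hasDerivAt {n : ℕ} {q v : ℝ → Fin n → ℝ} (a : ℝ → ℝ)
    (hq : ∀ t, HasDerivAt q (a t • v t) t) (hv : ∀ t, HasDerivAt v (-a t • q t) t) (t s : ℝ) :
    oscEnergy (q t) (v t) = oscEnergy (q s) (v s) :=
  is_const_of_deriv_eq_zero
    (fun t => (hasDerivAt_oscEnergy_eq_zero (hq t) (hv t)).differentiableAt)
    (fun t => (hasDerivAt_oscEnergy_eq_zero (hq t) (hv t)).deriv) t s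

section Rotation

variable {E : Type*} [NormedAddCommGroup E] [NormedSpace ℝ E]

theorem eq_cos_smul_add_sin_smul_of_hasDerivAt {q v : ℝ → E} {ω : ℝ}
    (hq : ∀ t, HasDerivAt q (ω • v t) t) (hv : ∀ t, HasDerivAt v (-ω • q t) t) (t : ℝ) :
    q t = cos (ω * t) • q 0 + sin (ω * t) • v 0 ∧
      v t = -sin (ω * t) • q 0 + cos (ω * t) • v 0 := by
  have hcos (t : ℝ) : HasDerivAt (fun t => cos (ω * t)) (-sin (ω * t) * ω) t := by
    simpa using ((hasDerivAt_id t).const_mul ω).cos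
  have hsin (t : ℝ) : HasDerivAt (fun t => sin (ω * t)) (cos (ω * t) * ω) t := by
    simpa using ((hasDerivAt_id t).const_mul ω).sin
  -- rotating the phase point back by the angle `ωt` gives a constant of motion
  have hu (t : ℝ) : HasDerivAt (fun t => cos (ω * t) • q t - sin (ω * t) • v t) 0 t :=
    (((hcos t).smul (hq t)).sub ((hsin t).smul (hv t))).congr_deriv (by module)
  have hw (t : ℝ) : HasDerivAt (fun t => sin (ω * t) • q t + cos (ω * t) • v t) 0 t :=
    (((hsin t).smul (hq t)).add ((hcos t).smul (hv t))).congr_deriv (by module)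
  have hu0 := is_const_of_deriv_eq_zero (fun t => (hu t).differentiableAt)
    (fun t => (hu t).deriv) t 0
  have hw0 := is_const_of_deriv_eq_zero (fun t => (hw t).differentiableAt)
    (fun t => (hw t).deriv) t 0
  simp only [mul_zero, cos_zero, sin_zero, one_smul, zero_smul, sub_zero, zero_add] at hu0 hw0
  have hpyth : cos (ω * t) ^ 2 + sin (ω * t) ^ 2 = 1 := cos_sq_add_sin_sq _
  rw [← hu0, ← hw0]
  constructor
  · calc q t = (cos (ω * t) ^ 2 + sin (ω * t) ^ 2) • q t := by rw [hpyth, one_smul]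
      _ = _ := by module
  · calc v t = (cos (ω * t) ^ 2 + sin (ω * t) ^ 2) • v t := by rw [hpyth, one_smul]
      _ = _ := by module

theorem periodic_of_hasDerivAt {q v : ℝ → E} {ω : ℝ}
    (hq : ∀ t, HasDerivAt q (ω • v t) t) (hv : ∀ t, HasDerivAt v (-ω • q t) t) :
    Function.Periodic q (2 * π / ω) ∧ Function.Periodic v (2 * π / ω) := by
  have hrot (a b : E) : Function.Periodic (fun s => cos s • a + sin s • b) (2 * π) := by
    intro s
    simp only [cos_add_two_pi, sin_add_two_pi]
  have hsol := eq_cos_smul_add_sin_smul_of_hasDerivAt hq hv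
  rw [div_eq_inv_mul]
  constructor
  · intro t
    rw [(hsol _).1, (hsol t).1]
    exact (hrot (q 0) (v 0)).const_mul ω t
  · intro t
    rw [(hsol _).2, (hsol t).2]
    simpa only [smul_neg, neg_smul, add_comm] using (hrot (v 0) (-q 0)).const_mul ω t

end Rotation

theorem stmt_18_general {n : ℕ} (f : ℝ → ℝ)
    (q v : ℝ → (Fin n → ℝ))
    (hq : ∀ t, HasDerivAt q (deriv f (oscEnergy (q t) (v t)) • v t) t)
    (hv : ∀ t, HasDerivAt v (-(deriv f (oscEnergy (q t) (v t))) • q t) t) :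
    (∀ t s : ℝ, oscEnergy (q t) (v t) = oscEnergy (q s) (v s)) ∧
    (∀ t : ℝ, HasDerivAt (fun t => deriv f (oscEnergy (q t) (v t)) • v t)
        (-(deriv f (oscEnergy (q 0) (v 0))) ^ 2 • q t) t) ∧
    (Function.Periodic q (2 * π / deriv f (oscEnergy (q 0) (v 0))) ∧
      Function.Periodic v (2 * π / deriv f (oscEnergy (q 0) (v 0)))) := by
  have hE := oscEnergy_eq_of_hasDerivAt _ hq hv
  set ω := deriv f (oscEnergy (q 0) (v 0))
  have hΩ (t : ℝ) : deriv f (oscEnergy (q t) (v t)) = ω := by rw [hE t 0]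
  simp only [hΩ] at hq hv ⊢
  refine ⟨hE, fun t => ((hv t).const_smul ω).congr_deriv ?_, periodic_of_hasDerivAt hq hv⟩
  rw [smul_smul]
  congr 1
  ring

/-- For the f-oscillator `Γ' = f'(E) Γ` (harmonic oscillator `Γ` deformed by `f`),
the frequency `Ω = f'(E)` is a constant of motion; in the adapted coordinates
`Qᵏ = qᵏ`, `𝒱ᵏ = f'(E) vᵏ` one has `Q' = 𝒱`, `𝒱' = −Ω² Q`, and (for `Ω = ω₀ > 0`)
every integral curve is periodic with period `2π/ω₀`. -/
theorem stmt_18 {n : ℕ} (f : ℝ → ℝ) (hf : ContDiff ℝ 2 f)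
    (q v : ℝ → (Fin n → ℝ))
    (hq : ∀ t, HasDerivAt q (deriv f (oscEnergy (q t) (v t)) • v t) t)
    (hv : ∀ t, HasDerivAt v (-(deriv f (oscEnergy (q t) (v t))) • q t) t)
    (hω : 0 < deriv f (oscEnergy (q 0) (v 0))) :
    (∀ t s : ℝ, oscEnergy (q t) (v t) = oscEnergy (q s) (v s)) ∧
    (∀ t : ℝ, HasDerivAt (fun t => deriv f (oscEnergy (q t) (v t)) • v t)
        (-(deriv f (oscEnergy (q 0) (v 0))) ^ 2 • q t) t) ∧
    (Function.Periodic q (2 * π / deriv f (oscEnergy (q 0) (v 0))) ∧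
      Function.Periodic v (2 * π / deriv f (oscEnergy (q 0) (v 0)))) :=
  stmt_18_general f q v hq hv
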